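/- arXiv:1912.02953 — 3 statements merged into one kernel-verified Lean document; each statement's English description precedes it below -/
import Mathlib

section
/- In the square grid, let F be rule 12 or rule 123. Let c be a configuration with at least one active cell, u a cell with c_u = 0, and τ ≥ 2 the Manhattan distance from u to the nearest active cell of c. Then either F^τ(c)_u = 1, or u is stable for c (it remains inactive at all times). -/
/-- The von Neumann neighborhood of a cell of the square grid. -/
def sqNbrs (p : ℤ × ℤ) : Finset (ℤ × ℤ) :=
  {(p.1 + 1, p.2), (p.1 - 1, p.2), (p.1, p.2 + 1), (p.1, p.2 - 1)}

/-- Number of active neighbors of `p` in configuration `c`. -/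
def sqActCount (c : ℤ × ℤ → Bool) (p : ℤ × ℤ) : ℕ :=
  ((sqNbrs p).filter (fun q => c q = true)).card

/-- The freezing totalistic rule on the square grid with activating set `I`:
active cells stay active, an inactive cell becomes active iff its number of
active neighbors lies in `I`. -/
def ruleS (I : Finset ℕ) (c : ℤ × ℤ → Bool) : ℤ × ℤ → Bool :=
  fun p => c p || decide (sqActCount c p ∈ I)

/-- A cell `u` is stable for `c` under `F` if it is inactive and remains
inactive at all times. -/
def isStable (F : (ℤ × ℤ → Bool) → (ℤ × ℤ → Bool)) (c : ℤ × ℤ → Bool)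
    (u : ℤ × ℤ) : Prop :=
  c u = false ∧ ∀ t : ℕ, F^[t] c u = false

/-- Manhattan distance between two cells of the square grid. -/
def sqDist (p q : ℤ × ℤ) : ℕ := (p.1 - q.1).natAbs + (p.2 - q.2).natAbs

/-- Manhattan distance from `u` to the nearest active cell of `c`. -/
noncomputable def sqDistToActive (c : ℤ × ℤ → Bool) (u : ℤ × ℤ) : ℕ :=
  sInf {d | ∃ v, c v = true ∧ sqDist u v = d}

namespace Stmt17Proof

attribute [local instance] Classical.propDecidable

/-! ### Geometry of the grid -/

def U : Finset (ℤ × ℤ) := {(1,0), (-1,0), (0,1), (0,-1)}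

lemma add_mem_sqNbrs {a : ℤ × ℤ} (ha : a ∈ U) (p : ℤ × ℤ) : p + a ∈ sqNbrs p := by
  fin_cases ha <;> simp [sqNbrs, Prod.ext_iff] <;> omega

lemma mem_sqNbrs_iff {p q : ℤ × ℤ} : q ∈ sqNbrs p ↔ ∃ a ∈ U, q = p + a := by
  constructor
  · intro h
    simp only [sqNbrs, Finset.mem_insert, Finset.mem_singleton] at h
    rcases h with h | h | h | h
    · exact ⟨(1,0), by simp [U], by rw [h]; simp [Prod.ext_iff]; try omega⟩
    · exact ⟨(-1,0), by simp [U], by rw [h]; simp [Prod.ext_iff]; try omega⟩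
    · exact ⟨(0,1), by simp [U], by rw [h]; simp [Prod.ext_iff]; try omega⟩
    · exact ⟨(0,-1), by simp [U], by rw [h]; simp [Prod.ext_iff]; try omega⟩
  · rintro ⟨a, ha, rfl⟩
    exact add_mem_sqNbrs ha p

lemma neg_mem_U {a : ℤ × ℤ} (ha : a ∈ U) : -a ∈ U := by
  fin_cases ha <;> decide

lemma exists_perp {a : ℤ × ℤ} (ha : a ∈ U) : ∃ b ∈ U, b ≠ a ∧ b ≠ -a := by
  fin_cases ha <;> decide

lemma sqNbrs_symm {p q : ℤ × ℤ} (h : q ∈ sqNbrs p) : p ∈ sqNbrs q := by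
  simp only [sqNbrs, Finset.mem_insert, Finset.mem_singleton, Prod.ext_iff] at h ⊢
  omega

lemma sqDist_of_mem_sqNbrs {p q : ℤ × ℤ} (h : q ∈ sqNbrs p) : sqDist p q = 1 := by
  simp only [sqNbrs, Finset.mem_insert, Finset.mem_singleton, Prod.ext_iff] at h
  simp only [sqDist]
  omega

lemma card_sqNbrs (p : ℤ × ℤ) : (sqNbrs p).card = 4 := by
  rw [sqNbrs]
  rw [Finset.card_insert_of_notMem (by simp [Prod.ext_iff]; try omega)]
  rw [Finset.card_insert_of_notMem (by simp [Prod.ext_iff]; try omega)]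
  rw [Finset.card_insert_of_notMem (by simp [Prod.ext_iff]; try omega)]
  simp

lemma sqDist_triangle (a b c : ℤ × ℤ) : sqDist a c ≤ sqDist a b + sqDist b c := by
  simp only [sqDist]; omega

lemma sqDist_eq_zero {a b : ℤ × ℤ} (h : sqDist a b = 0) : a = b := by
  simp only [sqDist] at h
  have h1 : a.1 = b.1 := by omega
  have h2 : a.2 = b.2 := by omega
  exact Prod.ext h1 h2

/-! ### The recursive activation predicate over an abstract level function -/

section Abstract

variable (d : ℤ × ℤ → ℕ) (I : Finset ℕ)

noncomputable def actL : ℕ → (ℤ × ℤ) → Prop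
  | 0, _ => True
  | n+1, v => ((sqNbrs v).filter (fun w => d w = n ∧ actL n w)).card ∈ I

/-- A cell eventually activates iff its level is 0 or the number of
eventually-active neighbours one level below is in `I`. -/
noncomputable def act (v : ℤ × ℤ) : Prop := actL d I (d v) v

/-- number of eventually active neighbours one level below -/
noncomputable def c1 (v : ℤ × ℤ) : ℕ :=
  ((sqNbrs v).filter (fun w => d w = d v - 1 ∧ act d I w)).card

lemma act_zero {v : ℤ × ℤ} (h : d v = 0) : act d I v := by
  unfold act; rw [h]; trivial

lemma act_succ {v : ℤ × ℤ} {n : ℕ} (h : d v = n + 1) :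
    act d I v ↔ c1 d I v ∈ I := by
  unfold act c1
  rw [h]
  show ((sqNbrs v).filter (fun w => d w = n ∧ actL d I n w)).card ∈ I ↔ _
  have hcong : ∀ w ∈ sqNbrs v,
      (d w = n ∧ actL d I n w) ↔ (d w = n + 1 - 1 ∧ act d I w) := by
    intro w _
    constructor
    · rintro ⟨hw, ha⟩
      refine ⟨by omega, ?_⟩
      unfold act; rw [hw]; exact ha
    · rintro ⟨hw, ha⟩
      have hw' : d w = n := by omega
      refine ⟨hw', ?_⟩
      unfold act at ha; rw [hw'] at ha; exact ha
  rw [Finset.filter_congr hcong]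

lemma c1_ge_one {v w : ℤ × ℤ} (hw : w ∈ sqNbrs v) (hdw : d w = d v - 1)
    (haw : act d I w) : 1 ≤ c1 d I v := by
  unfold c1
  have : w ∈ (sqNbrs v).filter (fun w => d w = d v - 1 ∧ act d I w) :=
    Finset.mem_filter.mpr ⟨hw, hdw, haw⟩
  exact Finset.card_pos.mpr ⟨w, this⟩

lemma c1_le_three {v p : ℤ × ℤ} (hp : p ∈ sqNbrs v) (hne : d v ≠ d p - 1) :
    c1 d I p ≤ 3 := by
  unfold c1
  have hvp : v ∈ sqNbrs p := sqNbrs_symm hp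
  have hsub : ((sqNbrs p).filter (fun w => d w = d p - 1 ∧ act d I w))
      ⊆ (sqNbrs p).erase v := by
    intro w hw
    rw [Finset.mem_filter] at hw
    refine Finset.mem_erase.mpr ⟨?_, hw.1⟩
    rintro rfl
    exact hne hw.2.1
  calc ((sqNbrs p).filter (fun w => d w = d p - 1 ∧ act d I w)).card
      ≤ ((sqNbrs p).erase v).card := Finset.card_le_card hsub
    _ = 3 := by rw [Finset.card_erase_of_mem hvp, card_sqNbrs]

lemma c1_zero_blocked {v : ℤ × ℤ} (h : c1 d I v = 0) :
    ∀ w ∈ sqNbrs v, d w = d v - 1 → ¬ act d I w := by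
  unfold c1 at h
  rw [Finset.card_eq_zero] at h
  intro w hw hdw haw
  have hmem : w ∈ (sqNbrs v).filter (fun w => d w = d v - 1 ∧ act d I w) :=
    Finset.mem_filter.mpr ⟨hw, hdw, haw⟩
  rw [h] at hmem
  exact absurd hmem (Finset.notMem_empty w)

lemma c1_three_jam {v p : ℤ × ℤ} (hp : p ∈ sqNbrs v) (hne : d v ≠ d p - 1)
    (h3 : c1 d I p = 3) :
    ∀ w ∈ sqNbrs p, w ≠ v → d w = d p - 1 ∧ act d I w := by
  unfold c1 at h3
  have hvp : v ∈ sqNbrs p := sqNbrs_symm hp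
  have hsub : ((sqNbrs p).filter (fun w => d w = d p - 1 ∧ act d I w))
      ⊆ (sqNbrs p).erase v := by
    intro w hw
    rw [Finset.mem_filter] at hw
    refine Finset.mem_erase.mpr ⟨?_, hw.1⟩
    rintro rfl
    exact hne hw.2.1
  have heq : (sqNbrs p).filter (fun w => d w = d p - 1 ∧ act d I w)
      = (sqNbrs p).erase v := by
    apply Finset.eq_of_subset_of_card_le hsub
    rw [Finset.card_erase_of_mem hvp, card_sqNbrs, h3]
  intro w hw hwv
  have hmem : w ∈ (sqNbrs p).filter (fun w => d w = d p - 1 ∧ act d I w) := by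
    rw [heq]
    exact Finset.mem_erase.mpr ⟨hwv, hw⟩
  rw [Finset.mem_filter] at hmem
  exact hmem.2

/-! #### Rule 123: there are no blocked cells -/

lemma no_blocked (hDesc : ∀ (p : ℤ × ℤ) (n : ℕ), d p = n + 1 → ∃ w ∈ sqNbrs p, d w = n)
    (hI : I = {1, 2, 3}) :
    ∀ s : ℕ, ∀ v : ℤ × ℤ, d v = s → 1 ≤ s →
      ∃ w ∈ sqNbrs v, d w = s - 1 ∧ act d I w := by
  intro s
  induction s using Nat.strong_induction_on with
  | _ s IH =>
    intro v hdv hs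
    obtain ⟨p, hp, hdp⟩ := hDesc v (s - 1) (by omega)
    rcases eq_or_lt_of_le hs with hs1 | hs2
    · exact ⟨p, hp, hdp, act_zero d I (by omega)⟩
    · -- s ≥ 2
      by_cases hap : act d I p
      · exact ⟨p, hp, hdp, hap⟩
      · exfalso
        have hdp' : d p = (s - 2) + 1 := by omega
        have hc1 : c1 d I p ∉ I := fun h => hap ((act_succ d I hdp').mpr h)
        have hle : c1 d I p ≤ 3 := c1_le_three d I hp (by omega)
        obtain ⟨w, hw, hdw, haw⟩ := IH (s - 1) (by omega) p hdp (by omega)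
        have hge : 1 ≤ c1 d I p := c1_ge_one d I hw (by omega) haw
        have hm : c1 d I p ∈ I := by
          have h123 : c1 d I p = 1 ∨ c1 d I p = 2 ∨ c1 d I p = 3 := by omega
          rcases h123 with h | h | h <;> rw [h, hI] <;> decide
        exact hc1 hm

/-! #### Rule 12: a blocked cell has all its neighbours one level below -/

lemma jam_step (hI : I = {1, 2}) {s : ℕ} (hs : 2 ≤ s)
    (IH : ∀ v : ℤ × ℤ, d v = s - 1 →
      (∀ w ∈ sqNbrs v, d w = s - 1 - 1 → ¬ act d I w) →
      ∀ z ∈ sqNbrs v, d z = s - 1 - 1)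
    {v p : ℤ × ℤ} (hp : p ∈ sqNbrs v) (hdv : d v = s) (hdp : d p = s - 1)
    (hnp : ¬ act d I p) :
    ∀ w ∈ sqNbrs p, w ≠ v → d w = s - 2 ∧ act d I w := by
  have hdp' : d p = (s - 2) + 1 := by omega
  have hc1 : c1 d I p ∉ I := fun h => hnp ((act_succ d I hdp').mpr h)
  have hle : c1 d I p ≤ 3 := c1_le_three d I hp (by omega)
  by_cases h0 : c1 d I p = 0
  · exfalso
    have hblock : ∀ w ∈ sqNbrs p, d w = s - 1 - 1 → ¬ act d I w := by
      intro w hw hdw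
      exact c1_zero_blocked d I h0 w hw (by omega)
    have := IH p hdp hblock v (sqNbrs_symm hp)
    omega
  · have h1 : c1 d I p ≠ 1 := fun h => hc1 (by rw [h, hI]; decide)
    have h2 : c1 d I p ≠ 2 := fun h => hc1 (by rw [h, hI]; decide)
    have h3 : c1 d I p = 3 := by omega
    intro w hw hwv
    obtain ⟨h1, h2⟩ := c1_three_jam d I hp (by omega) h3 w hw hwv
    exact ⟨by omega, h2⟩

lemma blocked_ring (hLip : ∀ p q : ℤ × ℤ, q ∈ sqNbrs p → d p ≤ d q + 1)
    (hDesc : ∀ (p : ℤ × ℤ) (n : ℕ), d p = n + 1 → ∃ w ∈ sqNbrs p, d w = n)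
    (hI : I = {1, 2}) :
    ∀ s : ℕ, 1 ≤ s → ∀ v : ℤ × ℤ, d v = s →
      (∀ w ∈ sqNbrs v, d w = s - 1 → ¬ act d I w) →
      ∀ z ∈ sqNbrs v, d z = s - 1 := by
  intro s
  induction s using Nat.strong_induction_on with
  | _ s IH =>
    intro hs v hdv hblock z hz
    obtain ⟨p, hp, hdp⟩ := hDesc v (s - 1) (by omega)
    rcases eq_or_lt_of_le hs with hs1 | hs2
    · -- s = 1 : p is at level 0, hence active; contradiction with blockedness
      exact absurd (act_zero d I (by omega)) (hblock p hp hdp)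
    · -- s ≥ 2
      have hnp : ¬ act d I p := hblock p hp hdp
      have IH' := IH (s - 1) (by omega) (by omega)
      have jam₁ := jam_step d I hI hs2 IH' hp hdv hdp hnp
      obtain ⟨a, ha, hpa⟩ := mem_sqNbrs_iff.mp hp
      obtain ⟨e, he, hze⟩ := mem_sqNbrs_iff.mp hz
      -- generic step: any direction other than ±a is at level s-1
      have key : ∀ e' ∈ U, e' ≠ a → e' ≠ -a → d (v + e') = s - 1 := by
        intro e' he' _ hena
        have hane : a + e' ≠ 0 := by
          intro h
          exact hena (by rw [← neg_eq_of_add_eq_zero_right h])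
        have hw : p + e' ∈ sqNbrs p := add_mem_sqNbrs he' p
        have hwv : p + e' ≠ v := by
          rw [hpa, add_assoc]
          intro h
          exact hane (by rwa [add_eq_left] at h)
        obtain ⟨hdw, -⟩ := jam₁ (p + e') hw hwv
        have hmem : v + e' ∈ sqNbrs (p + e') := by
          have hrw : v + e' = (p + e') + (-a) := by rw [hpa]; abel
          rw [hrw]
          exact add_mem_sqNbrs (neg_mem_U ha) _
        have h1 : d (v + e') ≤ d (p + e') + 1 := hLip _ _ (sqNbrs_symm hmem)
        have h2 : d v ≤ d (v + e') + 1 := hLip _ _ (add_mem_sqNbrs he' v)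
        omega
      by_cases hea : e = a
      · rw [hze, hea, ← hpa]; exact hdp
      · by_cases hena : e = -a
        · -- opposite direction: use a perpendicular neighbour q = v + b
          obtain ⟨b, hb, hba, hbna⟩ := exists_perp ha
          have hdq : d (v + b) = s - 1 := key b hb hba hbna
          have hq : v + b ∈ sqNbrs v := add_mem_sqNbrs hb v
          have hnq : ¬ act d I (v + b) := hblock _ hq hdq
          have jam₂ := jam_step d I hI hs2 IH' hq hdv hdq hnq
          have hw : (v + b) + (-a) ∈ sqNbrs (v + b) := add_mem_sqNbrs (neg_mem_U ha) _
          have hwv : (v + b) + (-a) ≠ v := by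
            rw [add_assoc]
            intro h
            rw [add_eq_left] at h
            apply hba
            have hba' : b = a + (b + -a) := by abel
            rw [h, add_zero] at hba'
            exact hba'
          obtain ⟨hdw, -⟩ := jam₂ _ hw hwv
          have hmem : z ∈ sqNbrs ((v + b) + (-a)) := by
            have hrw : z = ((v + b) + (-a)) + (-b) := by rw [hze, hena]; abel
            rw [hrw]
            exact add_mem_sqNbrs (neg_mem_U hb) _
          have h1 : d z ≤ d ((v + b) + (-a)) + 1 := hLip _ _ (sqNbrs_symm hmem)
          have h2 : d v ≤ d z + 1 := hLip _ _ hz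
          omega
        · rw [hze]; exact key e he hea hena

end Abstract

/-! ### Concrete facts about the distance to the active set -/

section Concrete

variable {c : ℤ × ℤ → Bool}

lemma dset_nonempty (hact : ∃ v, c v = true) (u : ℤ × ℤ) :
    {n | ∃ v, c v = true ∧ sqDist u v = n}.Nonempty := by
  obtain ⟨v, hv⟩ := hact
  exact ⟨sqDist u v, v, hv, rfl⟩

lemma d_witness (hact : ∃ v, c v = true) (u : ℤ × ℤ) :
    ∃ v, c v = true ∧ sqDist u v = sqDistToActive c u :=
  Nat.sInf_mem (dset_nonempty hact u)

lemma d_le {u w : ℤ × ℤ} (hw : c w = true) : sqDistToActive c u ≤ sqDist u w :=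
  Nat.sInf_le ⟨w, hw, rfl⟩

lemma d_zero_iff (hact : ∃ v, c v = true) {u : ℤ × ℤ} : sqDistToActive c u = 0 ↔ c u = true := by
  constructor
  · intro h
    obtain ⟨v, hv, hd⟩ := d_witness hact u
    rw [h] at hd
    rw [sqDist_eq_zero hd]
    exact hv
  · intro h
    have h0 : sqDistToActive c u ≤ sqDist u u := d_le h
    simp only [sqDist, sub_self, Int.natAbs_zero, add_zero] at h0
    omega

lemma d_lip (hact : ∃ v, c v = true) : ∀ p q : ℤ × ℤ, q ∈ sqNbrs p → sqDistToActive c p ≤ sqDistToActive c q + 1 := by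
  intro p q hq
  obtain ⟨z, hz, hdz⟩ := d_witness hact q
  calc sqDistToActive c p ≤ sqDist p z := d_le hz
    _ ≤ sqDist p q + sqDist q z := sqDist_triangle p q z
    _ = sqDistToActive c q + 1 := by rw [sqDist_of_mem_sqNbrs hq, hdz]; omega

lemma d_desc (hact : ∃ v, c v = true) : ∀ (p : ℤ × ℤ) (n : ℕ), sqDistToActive c p = n + 1 →
    ∃ w ∈ sqNbrs p, sqDistToActive c w = n := by
  intro p n hp
  obtain ⟨z, hz, hdz⟩ := d_witness hact p
  rw [hp] at hdz
  -- find a neighbour of p strictly closer to z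
  have hne : p ≠ z := by
    intro h
    rw [h] at hdz
    simp only [sqDist, sub_self, Int.natAbs_zero, add_zero] at hdz
    omega
  have : ∃ w ∈ sqNbrs p, sqDist w z = n := by
    rcases lt_trichotomy p.1 z.1 with h1 | h1 | h1
    · refine ⟨(p.1 + 1, p.2), by simp [sqNbrs], ?_⟩
      simp only [sqDist] at hdz ⊢
      omega
    · rcases lt_trichotomy p.2 z.2 with h2 | h2 | h2
      · refine ⟨(p.1, p.2 + 1), by simp [sqNbrs], ?_⟩
        simp only [sqDist] at hdz ⊢
        omega
      · exact absurd (Prod.ext h1 h2) hne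
      · refine ⟨(p.1, p.2 - 1), by simp [sqNbrs], ?_⟩
        simp only [sqDist] at hdz ⊢
        omega
    · refine ⟨(p.1 - 1, p.2), by simp [sqNbrs], ?_⟩
      simp only [sqDist] at hdz ⊢
      omega
  obtain ⟨w, hw, hwz⟩ := this
  refine ⟨w, hw, ?_⟩
  have hle : sqDistToActive c w ≤ n := hwz ▸ d_le hz
  have hge : sqDistToActive c p ≤ sqDistToActive c w + 1 := d_lip hact p w hw
  omega

end Concrete

/-! ### Main equivalence -/

lemma main_equiv {I : Finset ℕ} (hI : I = {1, 2} ∨ I = {1, 2, 3})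
    {c : ℤ × ℤ → Bool} (hact : ∃ v, c v = true) :
    ∀ (t : ℕ) (v : ℤ × ℤ),
      (ruleS I)^[t] c v = true ↔
        (sqDistToActive c v ≤ t ∧ act (sqDistToActive c) I v) := by
  set d := sqDistToActive c with hd
  have hzero : (0 : ℕ) ∉ I := by rcases hI with h | h <;> rw [h] <;> decide
  have hbig : ∀ n ∈ I, n ≤ 3 := by rcases hI with h | h <;> rw [h] <;> decide
  intro t
  induction t with
  | zero =>
    intro v
    simp only [Function.iterate_zero, id_eq, Nat.le_zero]
    constructor
    · intro h
      have h0 : d v = 0 := (d_zero_iff hact).mpr h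
      exact ⟨h0, act_zero d I h0⟩
    · rintro ⟨h0, -⟩
      exact (d_zero_iff hact).mp h0
  | succ t IH =>
    intro v
    rw [Function.iterate_succ_apply']
    have hstep : (ruleS I) ((ruleS I)^[t] c) v = true ↔
        ((ruleS I)^[t] c v = true ∨ sqActCount ((ruleS I)^[t] c) v ∈ I) := by
      simp [ruleS]
    rw [hstep]
    have hcount : sqActCount ((ruleS I)^[t] c) v
        = ((sqNbrs v).filter (fun w => d w ≤ t ∧ act d I w)).card := by
      unfold sqActCount
      congr 1
      apply Finset.filter_congr
      intro w _
      rw [IH w]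
    rcases lt_trichotomy (d v) (t + 1) with hlt | heq | hgt
    · -- d v ≤ t
      by_cases ha : act d I v
      · have hT : (ruleS I)^[t] c v = true := (IH v).mpr ⟨by omega, ha⟩
        constructor
        · intro _; exact ⟨by omega, ha⟩
        · intro _; exact Or.inl hT
      · -- v missed its activation time: show the count is never in I again
        have hF : ¬ ((ruleS I)^[t] c v = true) := fun h => ha ((IH v).mp h).2
        have hs1 : 1 ≤ d v := by
          rcases Nat.eq_zero_or_pos (d v) with h0 | h0
          · exact absurd (act_zero d I h0) ha
          · exact h0
        have hsucc : d v = (d v - 1) + 1 := by omega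
        have hc1 : c1 d I v ∉ I := fun h => ha ((act_succ d I hsucc).mpr h)
        have hcnt : sqActCount ((ruleS I)^[t] c) v ∉ I := by
          rw [hcount]
          by_cases h0 : c1 d I v = 0
          · -- blocked cell
            have hblock : ∀ w ∈ sqNbrs v, d w = d v - 1 → ¬ act d I w :=
              c1_zero_blocked d I h0
            rcases hI with hI12 | hI123
            · have hring := blocked_ring d I (d_lip hact) (d_desc hact) hI12
                (d v) hs1 v rfl hblock
              have hempty : (sqNbrs v).filter (fun w => d w ≤ t ∧ act d I w) = ∅ := by
                rw [Finset.filter_eq_empty_iff]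
                intro w hw
                rintro ⟨-, haw⟩
                exact hblock w hw (hring w hw) haw
              rw [hempty]
              simpa using hzero
            · exfalso
              obtain ⟨w, hw, hdw, haw⟩ := no_blocked d I (d_desc hact) hI123
                (d v) v rfl hs1
              exact absurd (c1_ge_one d I hw (by omega) haw) (by omega)
          · -- jammed cell : c1 ≥ 3, and the count only grows
            have hle3 : c1 d I v ≤ 4 := by
              unfold c1
              calc ((sqNbrs v).filter (fun w => d w = d v - 1 ∧ act d I w)).card
                  ≤ (sqNbrs v).card := Finset.card_le_card (Finset.filter_subset _ _)
                _ = 4 := card_sqNbrs v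
            obtain ⟨m, hmsmall, hmge⟩ :
                ∃ m : ℕ, (∀ n ∈ I, n ≤ m) ∧ m + 1 ≤ c1 d I v := by
              rcases hI with hI' | hI'
              · refine ⟨2, ?_, ?_⟩
                · intro n hn; rw [hI'] at hn
                  simp only [Finset.mem_insert, Finset.mem_singleton] at hn
                  omega
                · have h1 : c1 d I v ≠ 1 := fun h => hc1 (by rw [h, hI']; decide)
                  have h2 : c1 d I v ≠ 2 := fun h => hc1 (by rw [h, hI']; decide)
                  omega
              · refine ⟨3, ?_, ?_⟩
                · intro n hn; rw [hI'] at hn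
                  simp only [Finset.mem_insert, Finset.mem_singleton] at hn
                  omega
                · have h1 : c1 d I v ≠ 1 := fun h => hc1 (by rw [h, hI']; decide)
                  have h2 : c1 d I v ≠ 2 := fun h => hc1 (by rw [h, hI']; decide)
                  have h3 : c1 d I v ≠ 3 := fun h => hc1 (by rw [h, hI']; decide)
                  omega
            have hmono : c1 d I v ≤
                ((sqNbrs v).filter (fun w => d w ≤ t ∧ act d I w)).card := by
              unfold c1
              apply Finset.card_le_card
              intro w hw
              rw [Finset.mem_filter] at hw ⊢
              exact ⟨hw.1, by omega, hw.2.2⟩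
            intro hmem
            have := hmsmall _ hmem
            omega
        constructor
        · rintro (h | h)
          · exact absurd h hF
          · exact absurd h hcnt
        · rintro ⟨-, ha'⟩
          exact absurd ha' ha
    · -- d v = t + 1 : v activates now iff act v
      have hF : ¬ ((ruleS I)^[t] c v = true) := by
        intro h
        have := ((IH v).mp h).1
        omega
      have hN : ((sqNbrs v).filter (fun w => d w ≤ t ∧ act d I w)).card = c1 d I v := by
        unfold c1
        congr 1
        apply Finset.filter_congr
        intro w hw
        have hlow : d v ≤ d w + 1 := d_lip hact v w hw
        constructor
        · rintro ⟨h1, h2⟩; exact ⟨by omega, h2⟩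
        · rintro ⟨h1, h2⟩; exact ⟨by omega, h2⟩
      constructor
      · rintro (h | h)
        · exact absurd h hF
        · rw [hcount, hN] at h
          exact ⟨by omega, (act_succ d I heq).mpr h⟩
      · rintro ⟨-, ha⟩
        right
        rw [hcount, hN]
        exact (act_succ d I heq).mp ha
    · -- d v > t + 1 : nothing happens yet
      have hF : ¬ ((ruleS I)^[t] c v = true) := by
        intro h
        have := ((IH v).mp h).1
        omega
      have hempty : (sqNbrs v).filter (fun w => d w ≤ t ∧ act d I w) = ∅ := by
        rw [Finset.filter_eq_empty_iff]
        intro w hw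
        rintro ⟨h1, -⟩
        have hlw : d v ≤ d w + 1 := d_lip hact v w hw
        omega
      constructor
      · rintro (h | h)
        · exact absurd h hF
        · rw [hcount, hempty] at h
          simp at h
          exact absurd h (by simpa using hzero)
      · rintro ⟨h, -⟩
        omega

end Stmt17Proof

/-- square grid, `F` rule 12 or rule 123. If `c` has an active
cell, `c_u = 0` and `τ ≥ 2` is the Manhattan distance from `u` to the nearest
active cell, then either `u` is active at time `τ`, or `u` is stable. -/
theorem stmt17 (I : Finset ℕ) (hI : I = {1, 2} ∨ I = {1, 2, 3})
    (c : ℤ × ℤ → Bool) (hact : ∃ v, c v = true) (u : ℤ × ℤ)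
    (hu : c u = false) (τ : ℕ) (hτ2 : 2 ≤ τ)
    (hτ : sqDistToActive c u = τ) :
    (ruleS I)^[τ] c u = true ∨ isStable (ruleS I) c u := by
  classical
  by_cases ha : Stmt17Proof.act (sqDistToActive c) I u
  · left
    exact (Stmt17Proof.main_equiv hI hact τ u).mpr ⟨le_of_eq hτ, ha⟩
  · right
    refine ⟨hu, fun t => ?_⟩
    have h : ¬ ((ruleS I)^[t] c u = true) := fun h =>
      ha ((Stmt17Proof.main_equiv hI hact t u).mp h).2
    exact Bool.not_eq_true _ |>.mp h
end

section
/- In the square grid under rule 124: let c be a configuration with at least one active cell, u a cell with c_u = 0, and τ ≥ 2 the Manhattan distance from u to the nearest active cell of c. Then either u becomes active at time τ, τ+1 or τ+2 (i.e. F^{τ+2}(c)_u = 1), or u is stable for c. -/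
namespace S18

abbrev ev (c : ℤ × ℤ → Bool) (t : ℕ) : ℤ × ℤ → Bool := (ruleS {1, 2, 4})^[t] c

lemma dist_comm (p q : ℤ × ℤ) : sqDist p q = sqDist q p := by
  simp only [sqDist]; omega

lemma dist_tri (a b d : ℤ × ℤ) : sqDist a d ≤ sqDist a b + sqDist b d := by
  simp only [sqDist]; omega

lemma dist_zero {p q : ℤ × ℤ} (h : sqDist p q = 0) : p = q := by
  rcases p with ⟨a, b⟩; rcases q with ⟨a', b'⟩
  simp only [sqDist, Prod.mk.injEq] at *
  omega

lemma nbr_cases {p q : ℤ × ℤ} (h : sqDist p q = 1) :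
    q = (p.1 + 1, p.2) ∨ q = (p.1 - 1, p.2) ∨ q = (p.1, p.2 + 1) ∨ q = (p.1, p.2 - 1) := by
  rcases q with ⟨q1, q2⟩
  simp only [sqDist, Prod.mk.injEq] at *
  omega

lemma count_eq (f : ℤ × ℤ → Bool) (p : ℤ × ℤ) :
    sqActCount f p =
      (if f (p.1 + 1, p.2) = true then 1 else 0) +
      ((if f (p.1 - 1, p.2) = true then 1 else 0) +
      ((if f (p.1, p.2 + 1) = true then 1 else 0) +
      (if f (p.1, p.2 - 1) = true then 1 else 0))) := by
  have h1 : ((p.1 + 1, p.2) : ℤ × ℤ) ∉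
      ({(p.1 - 1, p.2), (p.1, p.2 + 1), (p.1, p.2 - 1)} : Finset (ℤ × ℤ)) := by
    simp [Prod.ext_iff]; omega
  have h2 : ((p.1 - 1, p.2) : ℤ × ℤ) ∉ ({(p.1, p.2 + 1), (p.1, p.2 - 1)} : Finset (ℤ × ℤ)) := by
    simp [Prod.ext_iff]; try omega
  have h3 : ((p.1, p.2 + 1) : ℤ × ℤ) ∉ ({(p.1, p.2 - 1)} : Finset (ℤ × ℤ)) := by
    simp [Prod.ext_iff]; omega
  rw [sqActCount, Finset.card_filter, sqNbrs, Finset.sum_insert h1, Finset.sum_insert h2,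
    Finset.sum_insert h3, Finset.sum_singleton]

lemma count_le_four (f : ℤ × ℤ → Bool) (p : ℤ × ℤ) : sqActCount f p ≤ 4 := by
  rw [count_eq]; split_ifs <;> omega

lemma count_ge_one {f : ℤ × ℤ → Bool} {p q : ℤ × ℤ} (h : sqDist p q = 1) (hq : f q = true) :
    1 ≤ sqActCount f p := by
  rw [count_eq]
  rcases nbr_cases h with rfl | rfl | rfl | rfl <;> simp [hq] <;> split_ifs <;> omega

lemma nbr_false_of_count_zero {f : ℤ × ℤ → Bool} {p : ℤ × ℤ} (h : sqActCount f p = 0)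
    {q : ℤ × ℤ} (hq : sqDist p q = 1) : f q = false := by
  cases hb : f q
  · rfl
  · have := count_ge_one hq hb; omega

lemma count_le_two {f : ℤ × ℤ → Bool} {p q1 q2 : ℤ × ℤ} (h1 : sqDist p q1 = 1)
    (h2 : sqDist p q2 = 1) (hne : q1 ≠ q2) (hf1 : f q1 = false) (hf2 : f q2 = false) :
    sqActCount f p ≤ 2 := by
  rw [count_eq]
  rcases nbr_cases h1 with rfl | rfl | rfl | rfl <;> rcases nbr_cases h2 with rfl | rfl | rfl | rfl <;>
    first
    | exact absurd rfl hne
    | (simp only [hf1, hf2, Bool.false_eq_true, if_false]; split_ifs <;> omega)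

lemma all_nbrs_of_count_four {f : ℤ × ℤ → Bool} {p : ℤ × ℤ} (h : sqActCount f p = 4)
    {q : ℤ × ℤ} (hq : sqDist p q = 1) : f q = true := by
  cases hb : f q
  · exfalso
    rw [count_eq] at h
    rcases nbr_cases hq with rfl | rfl | rfl | rfl <;>
      (simp only [hb, Bool.false_eq_true, if_false] at h; split_ifs at h <;> omega)
  · rfl

lemma count_four_of_all {f : ℤ × ℤ → Bool} {p : ℤ × ℤ}
    (h : ∀ q, sqDist p q = 1 → f q = true) : sqActCount f p = 4 := by
  rw [count_eq,
    h _ (by simp only [sqDist]; omega), h _ (by simp only [sqDist]; omega),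
    h _ (by simp only [sqDist]; omega), h _ (by simp only [sqDist]; omega)]
  rfl

lemma exists_active_nbr {f : ℤ × ℤ → Bool} {p : ℤ × ℤ} (h : 1 ≤ sqActCount f p) :
    ∃ q, sqDist p q = 1 ∧ f q = true := by
  by_cases h1 : f (p.1 + 1, p.2) = true
  · exact ⟨_, by simp only [sqDist]; omega, h1⟩
  by_cases h2 : f (p.1 - 1, p.2) = true
  · exact ⟨_, by simp only [sqDist]; omega, h2⟩
  by_cases h3 : f (p.1, p.2 + 1) = true
  · exact ⟨_, by simp only [sqDist]; omega, h3⟩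
  by_cases h4 : f (p.1, p.2 - 1) = true
  · exact ⟨_, by simp only [sqDist]; omega, h4⟩
  exfalso; rw [count_eq] at h; simp [h1, h2, h3, h4] at h

lemma count_mono {f g : ℤ × ℤ → Bool} (h : ∀ q, f q = true → g q = true) (p : ℤ × ℤ) :
    sqActCount f p ≤ sqActCount g p :=
  Finset.card_le_card (by
    intro q hq
    rw [Finset.mem_filter] at hq ⊢
    exact ⟨hq.1, h q hq.2⟩)

lemma ev_succ (c : ℤ × ℤ → Bool) (t : ℕ) (p : ℤ × ℤ) :
    ev c (t + 1) p = true ↔ ev c t p = true ∨ sqActCount (ev c t) p = 1 ∨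
      sqActCount (ev c t) p = 2 ∨ sqActCount (ev c t) p = 4 := by
  rw [show ev c (t + 1) = ruleS {1, 2, 4} (ev c t) from Function.iterate_succ_apply' _ _ _]
  simp [ruleS]

lemma act_mono {c : ℤ × ℤ → Bool} {p : ℤ × ℤ} {s t : ℕ} (hst : s ≤ t)
    (h : ev c s p = true) : ev c t p = true := by
  obtain ⟨k, rfl⟩ := Nat.exists_eq_add_of_le hst
  clear hst
  induction k with
  | zero => exact h
  | succ k ih => exact (ev_succ c (s + k) p).mpr (Or.inl ih)

lemma count_time_mono {c : ℤ × ℤ → Bool} {p : ℤ × ℤ} {s t : ℕ} (hst : s ≤ t) :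
    sqActCount (ev c s) p ≤ sqActCount (ev c t) p :=
  count_mono (fun _ hq => act_mono hst hq) p

def quiet (c : ℤ × ℤ → Bool) (θ : ℤ) (p : ℤ × ℤ) : Prop :=
  ∀ s : ℕ, (s : ℤ) ≤ θ → ev c s p = false

lemma quiet_mono {c : ℤ × ℤ → Bool} {θ θ' : ℤ} {p : ℤ × ℤ} (h : θ' ≤ θ)
    (hq : quiet c θ p) : quiet c θ' p := fun s hs => hq s (le_trans hs h)

lemma quiet_of_inactive {c : ℤ × ℤ → Bool} {p : ℤ × ℤ} {t : ℕ} (h : ev c t p = false) :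
    quiet c (t : ℤ) p := by
  intro s hs
  have hs' : s ≤ t := by exact_mod_cast hs
  cases hb : ev c s p
  · rfl
  · rw [act_mono hs' hb] at h; cases h

lemma count_not_activating {c : ℤ × ℤ → Bool} {p : ℤ × ℤ} {t : ℕ}
    (h : ev c (t + 1) p = false) :
    sqActCount (ev c t) p = 0 ∨ sqActCount (ev c t) p = 3 := by
  have h4 := count_le_four (ev c t) p
  have hn : ¬ (ev c t p = true ∨ sqActCount (ev c t) p = 1 ∨
      sqActCount (ev c t) p = 2 ∨ sqActCount (ev c t) p = 4) := by
    rw [← ev_succ, h]; simp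
  push_neg at hn
  omega

lemma rule {c : ℤ × ℤ → Bool} {θ : ℤ} {p q1 q2 : ℤ × ℤ} (h1 : sqDist p q1 = 1)
    (h2 : sqDist p q2 = 1) (hne : q1 ≠ q2) (hp : quiet c θ p) (hq1 : quiet c (θ - 1) q1)
    (hq2 : quiet c (θ - 1) q2) : ∀ q, sqDist p q = 1 → quiet c (θ - 1) q := by
  intro q hq s hs
  cases hb : ev c s q
  · rfl
  · exfalso
    have hc1 : 1 ≤ sqActCount (ev c s) p := count_ge_one hq hb
    have hc2 : sqActCount (ev c s) p ≤ 2 := count_le_two h1 h2 hne (hq1 s hs) (hq2 s hs)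
    have hp1 : ev c (s + 1) p = false := hp (s + 1) (by push_cast; omega)
    rcases count_not_activating hp1 with h | h <;> omega

lemma sharp_nbrs {c : ℤ × ℤ → Bool} {x n : ℤ × ℤ} {r : ℕ} (hr : 1 ≤ r) (hnb : sqDist x n = 1)
    (hact : ev c r n = true) (hnq : quiet c ((r : ℤ) - 1) n) (hxq : quiet c (r : ℤ) x) :
    ∀ p, sqDist n p = 1 → quiet c ((r : ℤ) - 2) p := by
  intro p hp s hs
  cases hb : ev c s p
  · rfl
  · exfalso
    have hsr : (s : ℤ) + 1 ≤ (r : ℤ) - 1 := by omega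
    have h1 : 1 ≤ sqActCount (ev c s) n := count_ge_one hp hb
    have h2 : ev c (s + 1) n = false := hnq (s + 1) (by push_cast; omega)
    rcases count_not_activating h2 with h | h
    · omega
    · have h3 := count_time_mono (c := c) (p := n) (show s ≤ r - 1 by omega)
      have h4 : ev c (r - 1) n = false := hnq (r - 1) (by
        have : ((r - 1 : ℕ) : ℤ) = (r : ℤ) - 1 := by omega
        omega)
      have h5 : ev c ((r - 1) + 1) n = true := by
        have he : r - 1 + 1 = r := by omega
        rw [he]; exact hact
      have h6 := (ev_succ c (r - 1) n).mp h5
      rw [h4] at h6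
      have h7 : sqActCount (ev c (r - 1)) n = 4 := by
        rcases h6 with h6 | h6
        · cases h6
        · omega
      have h8 : ev c (r - 1) x = true :=
        all_nbrs_of_count_four h7 (by rw [dist_comm]; exact hnb)
      have h9 : ev c (r - 1) x = false := hxq (r - 1) (by omega)
      rw [h8] at h9; cases h9

lemma inner_nbr (x w : ℤ × ℤ) (m : ℕ) (h : sqDist x w = m + 1) :
    ∃ w', sqDist x w' = m ∧ sqDist w' w = 1 := by
  simp only [sqDist] at h
  rcases lt_trichotomy x.1 w.1 with h1 | h1 | h1
  · exact ⟨(w.1 - 1, w.2), by simp only [sqDist]; omega, by simp only [sqDist]; omega⟩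
  · rcases lt_trichotomy x.2 w.2 with h2 | h2 | h2
    · exact ⟨(w.1, w.2 - 1), by simp only [sqDist]; omega, by simp only [sqDist]; omega⟩
    · exfalso; omega
    · exact ⟨(w.1, w.2 + 1), by simp only [sqDist]; omega, by simp only [sqDist]; omega⟩
  · exact ⟨(w.1 + 1, w.2), by simp only [sqDist]; omega, by simp only [sqDist]; omega⟩

lemma crux {c : ℤ × ℤ → Bool} {x n v : ℤ × ℤ} {r : ℕ} (hr : 1 ≤ r) (hnb : sqDist x n = 1)
    (hact : ev c r n = true) (hnq : quiet c ((r : ℤ) - 1) n)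
    (hxq : quiet c (r : ℤ) x) (hnbq : ∀ p, sqDist x p = 1 → quiet c ((r : ℤ) - 1) p)
    (hv : c v = true) (hdv : sqDist x v ≤ r) : False := by
  have hnbS := hnb; simp only [sqDist] at hnbS
  have factN : ∀ p, sqDist n p = 1 → quiet c ((r : ℤ) - 2) p := sharp_nbrs hr hnb hact hnq hxq
  -- shell-1 cells not opposite to n (and ≠ n): all their neighbors are quiet through r-2
  have perp : ∀ w, sqDist x w = 1 → w ≠ n → ¬(w.1 + n.1 = 2 * x.1 ∧ w.2 + n.2 = 2 * x.2) →
      ∀ p, sqDist w p = 1 → quiet c ((r : ℤ) - 2) p := by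
    intro w hw hwn how
    have hwS := hw; simp only [sqDist] at hwS
    have hwnS : ¬(w.1 = n.1 ∧ w.2 = n.2) := by
      intro hh; exact hwn (Prod.ext_iff.mpr hh)
    have d1 : sqDist w x = 1 := by rw [dist_comm]; exact hw
    have d2 : sqDist w (n.1 + w.1 - x.1, n.2 + w.2 - x.2) = 1 := by
      simp only [sqDist]; omega
    have d3 : sqDist n (n.1 + w.1 - x.1, n.2 + w.2 - x.2) = 1 := by
      simp only [sqDist]; omega
    have hne : x ≠ (n.1 + w.1 - x.1, n.2 + w.2 - x.2) := by
      simp only [ne_eq, Prod.ext_iff]; omega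
    intro p hp
    exact quiet_mono (by omega)
      (rule d1 d2 hne (hnbq w hw) (quiet_mono (by omega) hxq)
        (quiet_mono (by omega) (factN _ d3)) p hp)
  -- all shell-1 cells: neighbors quiet through r-2
  have shell1 : ∀ w, sqDist x w = 1 → ∀ p, sqDist w p = 1 → quiet c ((r : ℤ) - 2) p := by
    intro w hw
    by_cases hwn : w = n
    · subst hwn; exact fun p hp => factN p hp
    by_cases hop : w.1 + n.1 = 2 * x.1 ∧ w.2 + n.2 = 2 * x.2
    · -- w is the cell opposite to n
      have hwS := hw; simp only [sqDist] at hwS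
      have e1 : sqDist x (x.1 + (n.2 - x.2), x.2 + (n.1 - x.1)) = 1 := by
        simp only [sqDist]; omega
      have e2 : (x.1 + (n.2 - x.2), x.2 + (n.1 - x.1)) ≠ n := by
        simp only [ne_eq, Prod.ext_iff]; omega
      have e3 : ¬((x.1 + (n.2 - x.2)) + n.1 = 2 * x.1 ∧ (x.2 + (n.1 - x.1)) + n.2 = 2 * x.2) := by
        omega
      have e4 : sqDist (x.1 + (n.2 - x.2), x.2 + (n.1 - x.1))
          (w.1 + (n.2 - x.2), w.2 + (n.1 - x.1)) = 1 := by
        simp only [sqDist]; omega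
      have e5 : sqDist w (w.1 + (n.2 - x.2), w.2 + (n.1 - x.1)) = 1 := by
        simp only [sqDist]; omega
      have e6 : x ≠ (w.1 + (n.2 - x.2), w.2 + (n.1 - x.1)) := by
        simp only [ne_eq, Prod.ext_iff]; omega
      have d1 : sqDist w x = 1 := by rw [dist_comm]; exact hw
      have hq2 : quiet c ((r : ℤ) - 2) (w.1 + (n.2 - x.2), w.2 + (n.1 - x.1)) :=
        perp _ e1 e2 e3 _ e4
      intro p hp
      exact quiet_mono (by omega)
        (rule d1 e5 e6 (hnbq w hw) (quiet_mono (by omega) hxq)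
          (quiet_mono (by omega) hq2) p hp)
    · exact perp w hw hwn hop
  -- the big shell induction
  have B : ∀ k : ℕ, ∀ w, sqDist x w = k →
      quiet c ((r : ℤ) - k) w ∧ ∀ p, sqDist w p = 1 → quiet c ((r : ℤ) - k - 1) p := by
    intro k
    induction k using Nat.strong_induction_on with
    | _ k IH =>
      rcases k with _ | _ | k
      · intro w hw
        have := dist_zero hw; subst this
        constructor
        · exact quiet_mono (by push_cast; omega) hxq
        · exact fun p hp => quiet_mono (by push_cast; omega) (hnbq p hp)
      · intro w hw
        constructor
        · exact quiet_mono (by push_cast; omega) (hnbq w hw)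
        · exact fun p hp => quiet_mono (by push_cast; omega) (shell1 w hw p hp)
      · -- k+2
        have off : ∀ w', sqDist x w' = k + 2 → w'.1 ≠ x.1 → w'.2 ≠ x.2 →
            ∀ p, sqDist w' p = 1 → quiet c ((r : ℤ) - k - 3) p := by
          intro w' hw' ha hb
          have hwS := hw'; simp only [sqDist] at hwS
          obtain ⟨s1, hs1u, hd1⟩ : ∃ s1 : ℤ, (s1 = 1 ∨ s1 = -1) ∧
              sqDist x (w'.1 - s1, w'.2) = k + 1 := by
            rcases lt_trichotomy x.1 w'.1 with h1 | h1 | h1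
            · exact ⟨1, Or.inl rfl, by simp only [sqDist]; omega⟩
            · exact absurd h1.symm ha
            · exact ⟨-1, Or.inr rfl, by simp only [sqDist]; omega⟩
          obtain ⟨s2, hs2u, hd2⟩ : ∃ s2 : ℤ, (s2 = 1 ∨ s2 = -1) ∧
              sqDist x (w'.1, w'.2 - s2) = k + 1 := by
            rcases lt_trichotomy x.2 w'.2 with h2 | h2 | h2
            · exact ⟨1, Or.inl rfl, by simp only [sqDist]; omega⟩
            · exact absurd h2.symm hb
            · exact ⟨-1, Or.inr rfl, by simp only [sqDist]; omega⟩
          have hn1 : sqDist w' (w'.1 - s1, w'.2) = 1 := by simp only [sqDist]; omega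
          have hn2 : sqDist w' (w'.1, w'.2 - s2) = 1 := by simp only [sqDist]; omega
          have hne : ((w'.1 - s1, w'.2) : ℤ × ℤ) ≠ (w'.1, w'.2 - s2) := by
            simp only [ne_eq, Prod.ext_iff]; omega
          have hIH1 := IH (k + 1) (by omega) _ hd1
          have hIH2 := IH (k + 1) (by omega) _ hd2
          have hqw' : quiet c ((r : ℤ) - k - 2) w' :=
            quiet_mono (by push_cast; omega) (hIH1.2 w' (by rw [dist_comm]; exact hn1))
          intro p hp
          have := rule hn1 hn2 hne hqw' (quiet_mono (by push_cast; omega) hIH1.1)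
            (quiet_mono (by push_cast; omega) hIH2.1) p hp
          exact quiet_mono (by omega) this
        intro w hw
        have hwS := hw; simp only [sqDist] at hwS
        have hqw : quiet c ((r : ℤ) - k - 2) w := by
          obtain ⟨w', hd, hn⟩ := inner_nbr x w (k + 1) hw
          exact quiet_mono (by push_cast; omega) ((IH (k + 1) (by omega) w' hd).2 w hn)
        refine ⟨quiet_mono (by push_cast; omega) hqw, ?_⟩
        intro p hp
        by_cases ha : w.1 = x.1
        · -- vertical axis cell
          obtain ⟨s2, hs2u, hd1⟩ : ∃ s2 : ℤ, (s2 = 1 ∨ s2 = -1) ∧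
              sqDist x (w.1, w.2 - s2) = k + 1 := by
            rcases lt_trichotomy x.2 w.2 with h2 | h2 | h2
            · exact ⟨1, Or.inl rfl, by simp only [sqDist]; omega⟩
            · exfalso; omega
            · exact ⟨-1, Or.inr rfl, by simp only [sqDist]; omega⟩
          have hd1S := hd1; simp only [sqDist] at hd1S
          have hqd : sqDist x (w.1 + 1, w.2 - s2) = k + 2 := by simp only [sqDist]; omega
          have hqa : (w.1 + 1 : ℤ) ≠ x.1 := by omega
          have hqb : (w.2 - s2 : ℤ) ≠ x.2 := by omega
          have hq2 : quiet c ((r : ℤ) - k - 2 - 1) (w.1 + 1, w.2) := quiet_mono (by omega)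
            (off (w.1 + 1, w.2 - s2) hqd hqa hqb (w.1 + 1, w.2) (by simp only [sqDist]; omega))
          have hw1q : quiet c ((r : ℤ) - k - 2 - 1) (w.1, w.2 - s2) :=
            quiet_mono (by push_cast; omega) (IH (k + 1) (by omega) _ hd1).1
          have := rule (p := w) (q1 := (w.1, w.2 - s2)) (q2 := (w.1 + 1, w.2))
            (by simp only [sqDist]; omega) (by simp only [sqDist]; omega)
            (by simp only [ne_eq, Prod.ext_iff]; omega)
            hqw hw1q hq2 p hp
          exact quiet_mono (by push_cast; omega) this
        by_cases hb : w.2 = x.2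
        · -- horizontal axis cell
          obtain ⟨s1, hs1u, hd1⟩ : ∃ s1 : ℤ, (s1 = 1 ∨ s1 = -1) ∧
              sqDist x (w.1 - s1, w.2) = k + 1 := by
            rcases lt_trichotomy x.1 w.1 with h1 | h1 | h1
            · exact ⟨1, Or.inl rfl, by simp only [sqDist]; omega⟩
            · exfalso; omega
            · exact ⟨-1, Or.inr rfl, by simp only [sqDist]; omega⟩
          have hd1S := hd1; simp only [sqDist] at hd1S
          have hqd : sqDist x (w.1 - s1, w.2 + 1) = k + 2 := by simp only [sqDist]; omega
          have hqa : (w.1 - s1 : ℤ) ≠ x.1 := by omega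
          have hqb : (w.2 + 1 : ℤ) ≠ x.2 := by omega
          have hq2 : quiet c ((r : ℤ) - k - 2 - 1) (w.1, w.2 + 1) := quiet_mono (by omega)
            (off (w.1 - s1, w.2 + 1) hqd hqa hqb (w.1, w.2 + 1) (by simp only [sqDist]; omega))
          have hw1q : quiet c ((r : ℤ) - k - 2 - 1) (w.1 - s1, w.2) :=
            quiet_mono (by push_cast; omega) (IH (k + 1) (by omega) _ hd1).1
          have := rule (p := w) (q1 := (w.1 - s1, w.2)) (q2 := (w.1, w.2 + 1))
            (by simp only [sqDist]; omega) (by simp only [sqDist]; omega)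
            (by simp only [ne_eq, Prod.ext_iff]; omega)
            hqw hw1q hq2 p hp
          exact quiet_mono (by push_cast; omega) this
        · exact quiet_mono (by push_cast; omega) (off w hw ha hb p hp)
  have hB := (B (sqDist x v) v rfl).1
  have h0 : ev c 0 v = false := hB 0 (by push_cast; omega)
  simp only [ev, Function.iterate_zero, id] at h0
  rw [h0] at hv; cases hv

lemma main (c : ℤ × ℤ → Bool) : ∀ t : ℕ, ∀ x, ev c t x = true → quiet c ((t : ℤ) - 1) x →
    (∀ v, c v = true → (t : ℤ) ≤ sqDist x v + 2) ∧
    (∀ v, c v = true → (sqDist x v : ℤ) + 1 ≤ t → sqActCount (ev c (t - 1)) x = 4) := by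
  intro t
  induction t using Nat.strong_induction_on with
  | _ t IH =>
    rcases t with _ | t'
    · intro x h hq
      constructor
      · intro v hv; omega
      · intro v hv hd; exfalso; omega
    · intro x hact hq
      have hx' : ev c t' x = false := hq t' (by push_cast; omega)
      have hcnt : sqActCount (ev c t') x = 1 ∨ sqActCount (ev c t') x = 2 ∨
          sqActCount (ev c t') x = 4 := by
        rcases (ev_succ c t' x).mp hact with h | h
        · rw [hx'] at h; cases h
        · exact h
      by_cases h4 : sqActCount (ev c t') x = 4
      · refine ⟨?_, fun v hv hd => by simpa using h4⟩
        intro v hv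
        rcases t' with _ | t''
        · push_cast; omega
        · -- find a neighbor w newly active at t'' + 1
          have hnot4 : sqActCount (ev c t'') x ≠ 4 := by
            intro hcc
            have : ev c (t'' + 1) x = true :=
              (ev_succ c t'' x).mpr (Or.inr (Or.inr (Or.inr hcc)))
            rw [hx'] at this; cases this
          have hex : ∃ w, sqDist x w = 1 ∧ ev c (t'' + 1) w = true ∧ ev c t'' w = false := by
            by_contra hno
            push_neg at hno
            apply hnot4
            apply count_four_of_all
            intro q hql
            have hq4 := all_nbrs_of_count_four h4 hql
            cases hbq : ev c t'' q
            · exact absurd hbq (hno q hql hq4)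
            · rfl
          obtain ⟨w, hw1, hwt', hwt''⟩ := hex
          have hwq : quiet c ((t'' + 1 : ℕ) - 1 : ℤ) w :=
            quiet_mono (by push_cast; omega) (quiet_of_inactive hwt'')
          have hIH := IH (t'' + 1) (by omega) w hwt' hwq
          have hdwv : (t'' + 1 : ℤ) ≤ sqDist w v := by
            by_contra hlt
            push_neg at hlt
            have h44 := hIH.2 v hv (by push_cast; push_cast at hlt; omega)
            have hxw : ev c t'' x = true :=
              all_nbrs_of_count_four (by simpa using h44) (by rw [dist_comm]; exact hw1)
            have := hq t'' (by push_cast; omega)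
            rw [hxw] at this; cases this
          have htr := dist_tri w x v
          rw [dist_comm] at hw1
          push_cast
          push_cast at hdwv
          omega
      · -- count 1 or 2
        have habs : ∀ v, c v = true → (sqDist x v : ℤ) ≤ t' → False := by
          intro v hv hdle
          rcases t' with _ | t''
          · have : sqDist x v = 0 := by omega
            have hxv := dist_zero this
            subst hxv
            have h0 : ev c 0 x = false := hq 0 (by push_cast; try omega)
            simp only [ev, Function.iterate_zero, id] at h0
            rw [h0] at hv; cases hv
          · have hc'' : sqActCount (ev c t'') x = 0 := by
              have hna := count_not_activating (show ev c (t'' + 1) x = false from hx')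
              have hmono := count_time_mono (c := c) (p := x) (show t'' ≤ t'' + 1 by omega)
              omega
            obtain ⟨nn, hnn1, hnn2⟩ := exists_active_nbr (f := ev c (t'' + 1)) (p := x)
              (by omega)
            have hnnq : quiet c ((t'' + 1 : ℕ) - 1 : ℤ) nn := by
              have h0 : ev c t'' nn = false := nbr_false_of_count_zero hc'' hnn1
              exact quiet_mono (by push_cast; omega) (quiet_of_inactive h0)
            have hnbq' : ∀ p, sqDist x p = 1 → quiet c ((t'' + 1 : ℕ) - 1 : ℤ) p := by
              intro p hp
              have h0 : ev c t'' p = false := nbr_false_of_count_zero hc'' hp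
              exact quiet_mono (by push_cast; omega) (quiet_of_inactive h0)
            exact crux (r := t'' + 1) (by omega) hnn1 hnn2 hnnq
              (quiet_mono (by push_cast; omega) (quiet_of_inactive hx')) hnbq' hv
              (by exact_mod_cast hdle)
        constructor
        · intro v hv
          by_contra hlt
          push_neg at hlt
          exact habs v hv (by omega)
        · intro v hv hd
          exact (habs v hv (by omega)).elim

end S18

/-- square grid under rule 124. If `c` has an active cell,
`c_u = 0` and `τ ≥ 2` is the Manhattan distance from `u` to the nearest
active cell, then either `u` becomes active at time `τ`, `τ+1` or `τ+2`
(equivalently, by freezingness, `F^{τ+2}(c)_u = 1`), or `u` is stable. -/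
theorem stmt18 (c : ℤ × ℤ → Bool) (hact : ∃ v, c v = true) (u : ℤ × ℤ)
    (hu : c u = false) (τ : ℕ) (hτ2 : 2 ≤ τ)
    (hτ : sqDistToActive c u = τ) :
    (ruleS {1, 2, 4})^[τ + 2] c u = true ∨ isStable (ruleS {1, 2, 4}) c u := by
  by_cases hstab : ∀ t : ℕ, (ruleS {1, 2, 4})^[t] c u = false
  · exact Or.inr ⟨hu, hstab⟩
  · left
    push_neg at hstab
    obtain ⟨t0, ht0⟩ := hstab
    have hex : ∃ t : ℕ, S18.ev c t u = true := by
      refine ⟨t0, ?_⟩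
      cases hb : (ruleS {1, 2, 4})^[t0] c u
      · exact absurd hb ht0
      · exact hb
    classical
    have hT : S18.ev c (Nat.find hex) u = true := Nat.find_spec hex
    have hq : S18.quiet c ((Nat.find hex : ℤ) - 1) u := by
      intro s hs
      have hsT : s < Nat.find hex := by omega
      cases hb : S18.ev c s u
      · rfl
      · exact absurd hb (Nat.find_min hex hsT)
    obtain ⟨v, hv, hdv⟩ : ∃ v, c v = true ∧ sqDist u v = τ := by
      have hne : {d | ∃ v, c v = true ∧ sqDist u v = d}.Nonempty := by
        obtain ⟨v, hv⟩ := hact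
        exact ⟨sqDist u v, v, hv, rfl⟩
      have hmem := Nat.sInf_mem hne
      rw [sqDistToActive] at hτ
      rw [hτ] at hmem
      exact hmem
    have hmain := (S18.main c (Nat.find hex) u hT hq).1 v hv
    rw [hdv] at hmain
    have hle : Nat.find hex ≤ τ + 2 := by omega
    exact S18.act_mono hle hT
end

section
/- In the square grid under rule 12: let c be a configuration and τ ≥ 2 an integer such that every cell at Manhattan distance strictly less than τ from the origin is inactive in c. For i ∈ {1,…,τ−1} set a_i = F^{τ−1−i}(c)_{(i,1)} and b_i = F^{τ−1−i}(c)_{(i,−1)}. Let i* be the least i ∈ {1,…,τ−1} with a_i ≠ b_i if such an i exists, and i* = τ otherwise, and let z = |{ i ∈ {1,…,i*−1} : a_i = b_i = 1 }|. Then F^{τ−1}(c)_{(1,0)} = F^{τ−i*}(c)_{(i*,0)} if z is even, and F^{τ−1}(c)_{(1,0)} = 1 − F^{τ−i*}(c)_{(i*,0)} if z is odd. -/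
lemma sqActCount_eq (c : ℤ × ℤ → Bool) (p : ℤ × ℤ) :
    sqActCount c p = (cond (c (p.1+1,p.2)) 1 0) + (cond (c (p.1-1,p.2)) 1 0)
      + (cond (c (p.1,p.2+1)) 1 0) + (cond (c (p.1,p.2-1)) 1 0) := by
  have h12 : (p.1 + 1, p.2) ≠ (p.1 - 1, p.2) := by first | (simp [Prod.ext_iff]; omega) | simp [Prod.ext_iff]
  have h13 : (p.1 + 1, p.2) ≠ (p.1, p.2 + 1) := by first | (simp [Prod.ext_iff]; omega) | simp [Prod.ext_iff]
  have h14 : (p.1 + 1, p.2) ≠ (p.1, p.2 - 1) := by first | (simp [Prod.ext_iff]; omega) | simp [Prod.ext_iff]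
  have h23 : (p.1 - 1, p.2) ≠ (p.1, p.2 + 1) := by first | (simp [Prod.ext_iff]; omega) | simp [Prod.ext_iff]
  have h24 : (p.1 - 1, p.2) ≠ (p.1, p.2 - 1) := by first | (simp [Prod.ext_iff]; omega) | simp [Prod.ext_iff]
  have h34 : (p.1, p.2 + 1) ≠ (p.1, p.2 - 1) := by first | (simp [Prod.ext_iff]; omega) | simp [Prod.ext_iff]
  unfold sqActCount sqNbrs
  rw [Finset.filter_insert, Finset.filter_insert, Finset.filter_insert,
    Finset.filter_singleton]
  rcases h1 : c (p.1+1,p.2) <;> rcases h2 : c (p.1-1,p.2) <;>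
    rcases h3 : c (p.1,p.2+1) <;> rcases h4 : c (p.1,p.2-1) <;>
    simp [h1, h2, h3, h4, Finset.card_insert_of_notMem, h12, h13, h14, h23, h24, h34]

lemma ball (c : ℤ × ℤ → Bool) (τ : ℕ)
    (hball : ∀ p : ℤ × ℤ, p.1.natAbs + p.2.natAbs < τ → c p = false) :
    ∀ t (p : ℤ × ℤ), p.1.natAbs + p.2.natAbs + t < τ →
      (ruleS {1,2})^[t] c p = false := by
  intro t
  induction t with
  | zero => intro p hp; exact hball p (by omega)
  | succ t ih =>
    intro p hp
    rw [Function.iterate_succ_apply']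
    have h0 : (ruleS {1,2})^[t] c p = false := ih p (by omega)
    have h1 : (ruleS {1,2})^[t] c (p.1+1, p.2) = false := ih _ (by simp; omega)
    have h2 : (ruleS {1,2})^[t] c (p.1-1, p.2) = false := ih _ (by simp; omega)
    have h3 : (ruleS {1,2})^[t] c (p.1, p.2+1) = false := ih _ (by simp; omega)
    have h4 : (ruleS {1,2})^[t] c (p.1, p.2-1) = false := ih _ (by simp; omega)
    simp [ruleS, sqActCount_eq, h0, h1, h2, h3, h4]

lemma step (c : ℤ × ℤ → Bool) (τ : ℕ)
    (hball : ∀ p : ℤ × ℤ, p.1.natAbs + p.2.natAbs < τ → c p = false)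
    (i : ℕ) (h1 : 1 ≤ i) (h2 : i + 1 ≤ τ) :
    (ruleS {1,2})^[τ - i] c ((i : ℤ), 0) =
      (((((ruleS {1,2})^[τ - 1 - i] c ((i : ℤ), 1))
          != ((ruleS {1,2})^[τ - 1 - i] c ((i : ℤ), -1))) ||
        ((((ruleS {1,2})^[τ - 1 - i] c ((i : ℤ), 1))
            && ((ruleS {1,2})^[τ - 1 - i] c ((i : ℤ), -1))).xor
          ((ruleS {1,2})^[τ - (i + 1)] c ((i : ℤ) + 1, 0))))) := by
  have hsub : τ - i = (τ - 1 - i) + 1 := by omega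
  have hsub2 : τ - (i + 1) = τ - 1 - i := by omega
  rw [hsub, Function.iterate_succ_apply', hsub2]
  set d := (ruleS {1,2})^[τ - 1 - i] c with hd
  have h0 : d ((i : ℤ), 0) = false := ball c τ hball _ _ (by simp; omega)
  have hm : d ((i : ℤ) - 1, 0) = false := ball c τ hball _ _ (by simp; omega)
  unfold ruleS
  rw [sqActCount_eq]
  simp only []
  rcases hA : d ((i : ℤ), 1) with _|_ <;> rcases hB : d ((i : ℤ), -1) with _|_ <;>
    rcases hW : d ((i : ℤ) + 1, 0) with _|_ <;>
    simp [h0, hm, hA, hB, hW] <;> decide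

/-- square grid under rule 12. Suppose every cell at Manhattan
distance `< τ` from the origin is inactive in `c` (`τ ≥ 2`). For
`i ∈ {1,…,τ-1}` set `a i = F^[τ-1-i] c (i,1)` and `b i = F^[τ-1-i] c (i,-1)`;
let `i*` be the least `i ∈ {1,…,τ-1}` with `a i ≠ b i` if it exists and
`i* = τ` otherwise, and let `z` be the number of `i ∈ {1,…,i*-1}` with
`a i = b i = 1`. Then `F^[τ-1] c (1,0)` equals `F^[τ-i*] c (i*,0)` if `z` is
even, and its complement if `z` is odd. -/
theorem stmt19 (c : ℤ × ℤ → Bool) (τ : ℕ) (hτ : 2 ≤ τ)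
    (hball : ∀ p : ℤ × ℤ, p.1.natAbs + p.2.natAbs < τ → c p = false)
    (a b : ℕ → Bool)
    (ha : ∀ i : ℕ, a i = (ruleS {1, 2})^[τ - 1 - i] c ((i : ℤ), 1))
    (hb : ∀ i : ℕ, b i = (ruleS {1, 2})^[τ - 1 - i] c ((i : ℤ), -1))
    (istar : ℕ)
    (histar :
      (istar ∈ Finset.Icc 1 (τ - 1) ∧ a istar ≠ b istar ∧
        ∀ j ∈ Finset.Icc 1 (τ - 1), j < istar → a j = b j) ∨
      (istar = τ ∧ ∀ j ∈ Finset.Icc 1 (τ - 1), a j = b j))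
    (z : ℕ)
    (hz : z = ((Finset.Icc 1 (istar - 1)).filter
      (fun i => a i = true ∧ b i = true)).card) :
    (Even z →
      (ruleS {1, 2})^[τ - 1] c (1, 0) =
        (ruleS {1, 2})^[τ - istar] c ((istar : ℤ), 0)) ∧
    (¬ Even z →
      (ruleS {1, 2})^[τ - 1] c (1, 0) =
        !((ruleS {1, 2})^[τ - istar] c ((istar : ℤ), 0))) := by
  have hge : 1 ≤ istar := by
    rcases histar with ⟨h, _⟩ | ⟨h, _⟩
    · exact (Finset.mem_Icc.mp h).1
    · omega
  have hle : istar ≤ τ := by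
    rcases histar with ⟨h, _⟩ | ⟨h, _⟩
    · have := (Finset.mem_Icc.mp h).2; omega
    · omega
  have hagree : ∀ j, 1 ≤ j → j < istar → a j = b j := by
    intro j hj1 hj2
    rcases histar with ⟨h, _, hag⟩ | ⟨h, hag⟩
    · exact hag j (Finset.mem_Icc.mpr ⟨hj1, by have := (Finset.mem_Icc.mp h).2; omega⟩) hj2
    · exact hag j (Finset.mem_Icc.mpr ⟨hj1, by omega⟩)
  set v : ℕ → Bool := fun k => (ruleS {1,2})^[τ - k] c ((k : ℤ), 0) with hv
  have key : ∀ m k, 1 ≤ k → k + m = istar →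
      (Even ((Finset.Icc k (istar-1)).filter
        (fun i => a i = true ∧ b i = true)).card → v k = v istar) ∧
      (¬ Even ((Finset.Icc k (istar-1)).filter
        (fun i => a i = true ∧ b i = true)).card → v k = !(v istar)) := by
    intro m
    induction m with
    | zero =>
      intro k hk1 hk2
      have hk : k = istar := by omega
      subst hk
      have he : Finset.Icc k (k-1) = ∅ := Finset.Icc_eq_empty (by omega)
      simp [he]
    | succ m ih =>
      intro k hk1 hk2
      have hklt : k < istar := by omega
      have hstep := step c τ hball k hk1 (by omega)
      rw [← ha k, ← hb k] at hstep
      have hvk : v k = ((a k != b k) ||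
          ((a k && b k).xor (v (k+1)))) := by
        rw [hv]
        simp only []
        rw [hstep]
        norm_num
      have hab : a k = b k := hagree k hk1 hklt
      have hins : Finset.Icc k (istar-1) = insert k (Finset.Icc (k+1) (istar-1)) := by
        ext x; simp [Finset.mem_Icc]; omega
      have hnot : k ∉ (Finset.Icc (k+1) (istar-1)).filter
          (fun i => a i = true ∧ b i = true) := by
        simp [Finset.mem_Icc]
      have ih' := ih (k+1) (by omega) (by omega)
      rw [hins, Finset.filter_insert]
      rcases hak : a k with _|_
      · have hbk : b k = false := by rw [← hab, hak]
        rw [hvk, hak, hbk]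
        simpa [hak, hbk] using ih'
      · have hbk : b k = true := by rw [← hab, hak]
        rw [hvk, hak, hbk]
        simp only [hak, hbk, and_self, if_pos, bne_self_eq_false, Bool.false_or,
          Bool.true_and, Finset.card_insert_of_notMem hnot]
        constructor
        · intro hev
          have : ¬ Even ((Finset.Icc (k+1) (istar-1)).filter
              (fun i => a i = true ∧ b i = true)).card := by
            rcases Nat.even_add_one.mp hev with h
            exact h
          rw [ih'.2 this]
          simp [Bool.xor_comm]
        · intro hodd
          have : Even ((Finset.Icc (k+1) (istar-1)).filter
              (fun i => a i = true ∧ b i = true)).card := by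
            by_contra h
            exact hodd (Nat.even_add_one.mpr (by simpa using h))
          rw [ih'.1 this]
          simp [Bool.xor_comm]
  have h1 := key (istar - 1) 1 le_rfl (by omega)
  have hv1 : v 1 = (ruleS {1,2})^[τ - 1] c (1, 0) := by rw [hv]; norm_num
  have hvi : v istar = (ruleS {1,2})^[τ - istar] c ((istar : ℤ), 0) := rfl
  rw [← hv1, ← hvi, hz]
  exact h1
end
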